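/- Let φ, ψ ∈ C_c^∞(ℝⁿ) and let L_φ, L_ψ ∈ ℕ₀ ∪ {−1} be their vanishing-moment orders. Set φ_l := 2^{ln}φ(2^l·) and ψ_j := 2^{jn}ψ(2^j·). Then there is a constant C > 0, independent of j and l, such that ‖φ_l ∗ ψ_j‖_{L_∞(ℝⁿ)} ≤ C 2^{(l−j)(L_ψ+1)} 2^{ln} whenever l ≤ j, and ‖φ_l ∗ ψ_j‖_{L_∞(ℝⁿ)} ≤ C 2^{(j−l)(L_φ+1)} 2^{jn} whenever j < l. -/

import Mathlib

open MeasureTheory ENNReal Filter Topology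

noncomputable section

def lqNorm (q : ℝ≥0∞) (a : ℕ → ℝ≥0∞) : ℝ≥0∞ :=
  if q = ∞ then ⨆ k, a k else (∑' k, a k ^ q.toReal) ^ (1 / q.toReal)

def lpSum {ι : Type*} (p : ℝ≥0∞) (a : ι → ℝ≥0∞) : ℝ≥0∞ :=
  if p = ∞ then ⨆ m, a m else (∑' m, a m ^ p.toReal) ^ (1 / p.toReal)
abbrev Dstrb (n : ℕ) := ((Fin n → ℝ) → ℝ) →ₗ[ℝ] ℝ

def distConv (n : ℕ) (f : Dstrb n) (φ : (Fin n → ℝ) → ℝ) (x : Fin n → ℝ) : ℝ :=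
  f fun y => φ (x - y)

def IsTestFun (n : ℕ) (g : (Fin n → ℝ) → ℝ) : Prop :=
  ContDiff ℝ (⊤ : ℕ∞) g ∧ HasCompactSupport g

def phiOf (n : ℕ) (φ₀ : (Fin n → ℝ) → ℝ) (x : Fin n → ℝ) : ℝ :=
  φ₀ x - (2 : ℝ)⁻¹ ^ n * φ₀ ((2 : ℝ)⁻¹ • x)

def phiFam (n : ℕ) (φ₀ : (Fin n → ℝ) → ℝ) : ℕ → (Fin n → ℝ) → ℝ
  | 0 => φ₀
  | k + 1 => fun x => (2 : ℝ) ^ ((k + 1) * n) * phiOf n φ₀ ((2 : ℝ) ^ (k + 1) • x)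

def kernFam (n : ℕ) (ψ₀ ψ : (Fin n → ℝ) → ℝ) : ℕ → (Fin n → ℝ) → ℝ
  | 0 => ψ₀
  | k + 1 => fun x => (2 : ℝ) ^ ((k + 1) * n) * ψ ((2 : ℝ) ^ (k + 1) • x)

def besovNorm (n : ℕ) (p q : ℝ≥0∞) (t : ℕ → (Fin n → ℝ) → ℝ)
    (φ₀ : (Fin n → ℝ) → ℝ) (f : Dstrb n) : ℝ≥0∞ :=
  lqNorm q fun k =>
    eLpNorm (fun x => t k x * distConv n f (phiFam n φ₀ k) x) p volume

def seSeminorm (n : ℕ) (N : ℕ) (g : (Fin n → ℝ) → ℝ) : ℝ≥0∞ :=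
  ⨆ x : Fin n → ℝ, ENNReal.ofReal
    (Real.exp (N * ‖x‖) * ∑ i ∈ Finset.range (N + 1), ‖iteratedFDeriv ℝ i g x‖)

def MemSe' (n : ℕ) (f : Dstrb n) : Prop :=
  ∃ (C : ℝ) (N : ℕ), 0 < C ∧ ∀ g : (Fin n → ℝ) → ℝ, ContDiff ℝ (⊤ : ℕ∞) g →
    ENNReal.ofReal |f g| ≤ ENNReal.ofReal C * seSeminorm n N g

def MomentsVanish (n : ℕ) (L : ℤ) (ψ : (Fin n → ℝ) → ℝ) : Prop :=
  ∀ β : Fin n → ℕ, ((∑ i, β i : ℕ) : ℤ) ≤ L → (∫ x, (∏ i, x i ^ β i) * ψ x) = 0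


/-- The scaled family `φ_l := 2^{ln} φ(2^l ·)`. -/
def scaleFun (n : ℕ) (φ : (Fin n → ℝ) → ℝ) (l : ℕ) (x : Fin n → ℝ) : ℝ :=
  (2 : ℝ) ^ (l * n) * φ ((2 : ℝ) ^ l • x)

/-! The substitution `v = 2^l y` gives `(φ_l ∗ ψ_j)(x) = 2^{ln} (φ ∗ ψ_{j-l})(2^l x)` for `l ≤ j`.
Since `ψ_{j-l}` still has vanishing moments up to order `L_ψ`, it annihilates the Taylor polynomial
of degree `L_ψ` of `φ(2^l x - ·)` at `0`, so only the Taylor remainder, of size `O(|v|^{L_ψ+1})`,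
contributes; and `∫ |v|^M |ψ_k(v)| dv = 2^{-kM} ∫ |v|^M |ψ(v)| dv`. The case `j < l` is the same
with `φ` and `ψ` exchanged, by commutativity of convolution. -/

open Finset

variable {n : ℕ}

theorem norm_sub_sum_iteratedFDeriv_le {E F : Type*} [NormedAddCommGroup E] [NormedSpace ℝ E]
    [NormedAddCommGroup F] [NormedSpace ℝ F] [CompleteSpace F] {f : E → F} {M : ℕ}
    (hf : ContDiff ℝ M f) {B : ℝ} (hB : ∀ z, ‖iteratedFDeriv ℝ M f z‖ ≤ B) (x y : E) :
    ‖f (x + y) - ∑ k ∈ range M, (k.factorial : ℝ)⁻¹ • iteratedFDeriv ℝ k f x (fun _ => y)‖ ≤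
      B * ‖y‖ ^ M := by
  cases M with
  | zero => simpa using hB (x + y)
  | succ K =>
    have hrem : ‖∫ t in (0 : ℝ)..1,
        (1 - t) ^ K • iteratedFDeriv ℝ (K + 1) f (x + t • y) (fun _ => y)‖ ≤
          B * ‖y‖ ^ (K + 1) * |1 - 0| := by
      refine intervalIntegral.norm_integral_le_of_norm_le_const fun t ht => ?_
      rw [Set.uIoc_of_le zero_le_one] at ht
      have h1t : ‖(1 - t) ^ K‖ ≤ 1 := by
        rw [norm_pow, Real.norm_eq_abs, abs_of_nonneg (by linarith [ht.2])]
        exact pow_le_one₀ (by linarith [ht.2]) (by linarith [ht.1])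
      calc ‖(1 - t) ^ K • iteratedFDeriv ℝ (K + 1) f (x + t • y) (fun _ => y)‖
          ≤ 1 * (B * ∏ _ : Fin (K + 1), ‖y‖) := by
            rw [norm_smul]
            gcongr
            exact ContinuousMultilinearMap.le_of_opNorm_le (hB _) _
        _ = B * ‖y‖ ^ (K + 1) := by simp
    have hfact : (K.factorial : ℝ)⁻¹ ≤ 1 :=
      inv_le_one_of_one_le₀ (by exact_mod_cast K.factorial_pos)
    rw [map_add_eq_sum_add_integral_iteratedFDeriv fun t _ => hf.contDiffAt, add_sub_cancel_left,
      norm_smul, Real.norm_of_nonneg (by positivity)]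
    calc _ ≤ 1 * (B * ‖y‖ ^ (K + 1) * |1 - 0|) := by
            gcongr
      _ = B * ‖y‖ ^ (K + 1) := by simp

theorem ContinuousMultilinearMap.apply_const_eq_sum_monomial {m : ℕ}
    (T : ContinuousMultilinearMap ℝ (fun _ : Fin m => Fin n → ℝ) ℝ) (y : Fin n → ℝ) :
    T (fun _ => y) = ∑ d : Fin m → Fin n,
      (∏ i, y i ^ #{p | d p = i}) * T (fun p => Pi.single (d p) 1) := by
  conv_lhs => rw [pi_eq_sum_univ' y]
  rw [T.map_sum]
  refine sum_congr rfl fun d _ => ?_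
  rw [T.map_smul_univ, smul_eq_mul, ← prod_fiberwise' univ d]
  simp [eq_comm]

theorem MomentsVanish.integral_multilinear_mul_eq_zero {L : ℤ} {g : (Fin n → ℝ) → ℝ}
    (hg : MomentsVanish n L g) (hgc : Continuous g) (hgs : HasCompactSupport g) {m : ℕ}
    (hm : (m : ℤ) ≤ L) (T : ContinuousMultilinearMap ℝ (fun _ : Fin m => Fin n → ℝ) ℝ) :
    ∫ y, T (fun _ => y) * g y = 0 := by
  simp_rw [T.apply_const_eq_sum_monomial, sum_mul]
  rw [integral_finsetSum _ fun d _ => ?_]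
  · refine sum_eq_zero fun d _ => ?_
    simp_rw [mul_comm _ (T _), mul_assoc]
    rw [integral_const_mul, hg _ ?_, mul_zero]
    rwa [← card_eq_sum_card_fiberwise fun _ _ => mem_univ _, Finset.card_univ, Fintype.card_fin]
  · exact (by fun_prop : Continuous _).integrable_of_hasCompactSupport hgs.mul_left

theorem exists_abs_integral_sub_mul_le {f : (Fin n → ℝ) → ℝ} {M : ℕ} (hf : ContDiff ℝ M f)
    (hfs : HasCompactSupport f) :
    ∃ B, ∀ g : (Fin n → ℝ) → ℝ, Continuous g → HasCompactSupport g →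
      MomentsVanish n ((M : ℤ) - 1) g → ∀ x, |∫ y, f (x - y) * g y| ≤ B * ∫ y, ‖y‖ ^ M * |g y| := by
  obtain ⟨B, hB⟩ :=
    (hf.continuous_iteratedFDeriv le_rfl).bounded_above_of_compact_support (hfs.iteratedFDeriv M)
  refine ⟨B, fun g hgc hgs hg x => ?_⟩
  have hint (h : (Fin n → ℝ) → ℝ) (hh : Continuous h) : Integrable fun y => h y * g y :=
    (hh.mul hgc).integrable_of_hasCompactSupport hgs.mul_left
  -- the Taylor polynomial of `y ↦ f (x - y)` at `0`, of degree `< M`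
  set T : ∀ k : ℕ, ContinuousMultilinearMap ℝ (fun _ : Fin k => Fin n → ℝ) ℝ := fun k =>
    ((k.factorial : ℝ)⁻¹ • iteratedFDeriv ℝ k f x).compContinuousLinearMap
      fun _ => -ContinuousLinearMap.id ℝ _
  have hTc (k : ℕ) : Continuous fun y => T k fun _ => y :=
    (T k).coe_continuous.comp (continuous_pi fun _ => continuous_id)
  have hP : ∫ y, (∑ k ∈ range M, T k (fun _ => y)) * g y = 0 := by
    simp_rw [sum_mul]
    rw [integral_finsetSum _ fun k _ => hint _ (hTc k)]
    exact sum_eq_zero fun k hk =>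
      hg.integral_multilinear_mul_eq_zero hgc hgs (by simp at hk; omega) (T k)
  have hTaylor (y : Fin n → ℝ) : |f (x - y) - ∑ k ∈ range M, T k (fun _ => y)| ≤ B * ‖y‖ ^ M := by
    simpa [T, sub_eq_add_neg] using norm_sub_sum_iteratedFDeriv_le hf hB x (-y)
  calc |∫ y, f (x - y) * g y|
      = ‖∫ y, (f (x - y) - ∑ k ∈ range M, T k (fun _ => y)) * g y‖ := by
        rw [← Real.norm_eq_abs, ← sub_zero (∫ y, f (x - y) * g y), ← hP, ← integral_sub]
        · simp_rw [sub_mul]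
        · exact hint _ (hf.continuous.comp (by fun_prop))
        · exact hint _ (continuous_finsetSum _ fun k _ => hTc k)
    _ ≤ ∫ y, B * (‖y‖ ^ M * |g y|) := by
        refine norm_integral_le_of_norm_le ?_ (ae_of_all _ fun y => ?_)
        · exact (((continuous_norm.pow M).mul hgc.abs).integrable_of_hasCompactSupport
            (hgs.abs.mul_left (f := fun y => ‖y‖ ^ M))).const_mul B
        · rw [norm_mul, Real.norm_eq_abs, Real.norm_eq_abs, ← mul_assoc]
          exact mul_le_mul_of_nonneg_right (hTaylor y) (abs_nonneg _)
    _ = B * ∫ y, ‖y‖ ^ M * |g y| := integral_const_mul _ _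

theorem integral_sub_mul_comm {G : Type*} [AddCommGroup G] [MeasurableSpace G] [MeasurableAdd G]
    [MeasurableNeg G] (μ : Measure G) [μ.IsAddLeftInvariant] [μ.IsNegInvariant] (f g : G → ℝ)
    (x : G) : ∫ y, f (x - y) * g y ∂μ = ∫ y, g (x - y) * f y ∂μ := by
  conv_rhs => rw [← integral_sub_left_eq_self _ μ x]
  simp only [_root_.sub_sub_cancel, mul_comm]

theorem integral_scaleFun (F : (Fin n → ℝ) → ℝ) (k : ℕ) : ∫ v, scaleFun n F k v = ∫ u, F u := by
  simp only [scaleFun]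
  rw [integral_const_mul, Measure.integral_comp_smul, Module.finrank_fin_fun, smul_eq_mul,
    pow_mul, abs_of_pos (by positivity), ← mul_assoc, mul_inv_cancel₀ (by positivity), one_mul]

theorem continuous_scaleFun {ψ : (Fin n → ℝ) → ℝ} (hψ : Continuous ψ) (k : ℕ) :
    Continuous (scaleFun n ψ k) :=
  continuous_const.mul (hψ.comp (continuous_const_smul _))

theorem hasCompactSupport_scaleFun {ψ : (Fin n → ℝ) → ℝ} (hψ : HasCompactSupport ψ) (k : ℕ) :
    HasCompactSupport (scaleFun n ψ k) :=
  (hψ.comp_smul (by positivity : (2 : ℝ) ^ k ≠ 0)).mul_left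

theorem momentsVanish_scaleFun {L : ℤ} {ψ : (Fin n → ℝ) → ℝ} (hψ : MomentsVanish n L ψ)
    (k : ℕ) : MomentsVanish n L (scaleFun n ψ k) := by
  intro β hβ
  have h (v : Fin n → ℝ) : (∏ i, v i ^ β i) * scaleFun n ψ k v =
      ((2 : ℝ) ^ k)⁻¹ ^ (∑ i, β i) * scaleFun n (fun u => (∏ i, u i ^ β i) * ψ u) k v := by
    simp only [scaleFun, Pi.smul_apply, smul_eq_mul, mul_pow, prod_mul_distrib, prod_pow_eq_pow_sum,
      inv_pow]
    field_simp
  simp_rw [h]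
  rw [integral_const_mul, integral_scaleFun, hψ β hβ, mul_zero]

theorem integral_norm_pow_mul_abs_scaleFun (ψ : (Fin n → ℝ) → ℝ) (M k : ℕ) :
    ∫ v, ‖v‖ ^ M * |scaleFun n ψ k v| = ((2 : ℝ) ^ k)⁻¹ ^ M * ∫ u, ‖u‖ ^ M * |ψ u| := by
  have h (v : Fin n → ℝ) : ‖v‖ ^ M * |scaleFun n ψ k v| =
      ((2 : ℝ) ^ k)⁻¹ ^ M * scaleFun n (fun u => ‖u‖ ^ M * |ψ u|) k v := by
    simp only [scaleFun, norm_smul, abs_mul, mul_pow, inv_pow,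
      Real.norm_of_nonneg (by positivity : (0 : ℝ) ≤ 2 ^ k),
      abs_of_pos (by positivity : (0 : ℝ) < 2 ^ (k * n))]
    field_simp
  simp_rw [h]
  rw [integral_const_mul, integral_scaleFun]

theorem integral_scaleFun_sub_mul_scaleFun (φ ψ : (Fin n → ℝ) → ℝ) {l j : ℕ} (hlj : l ≤ j)
    (x : Fin n → ℝ) :
    ∫ y, scaleFun n φ l (x - y) * scaleFun n ψ j y =
      (2 : ℝ) ^ (l * n) * ∫ v, φ ((2 : ℝ) ^ l • x - v) * scaleFun n ψ (j - l) v := by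
  rw [← integral_scaleFun (fun v => φ ((2 : ℝ) ^ l • x - v) * scaleFun n ψ (j - l) v) l,
    ← integral_const_mul]
  congr 1 with y
  obtain ⟨k, rfl⟩ := Nat.exists_eq_add_of_le hlj
  simp only [scaleFun, Nat.add_sub_cancel_left, smul_sub, smul_smul, ← pow_add, add_mul]
  rw [pow_add (2 : ℝ) (l * n), add_comm k]
  ring

theorem exists_abs_integral_scaleFun_sub_mul_scaleFun_le {φ ψ : (Fin n → ℝ) → ℝ} {M : ℕ}
    (hφ : ContDiff ℝ M φ) (hφs : HasCompactSupport φ) (hψ : Continuous ψ)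
    (hψs : HasCompactSupport ψ) (hmψ : MomentsVanish n ((M : ℤ) - 1) ψ) :
    ∃ C, ∀ l j : ℕ, l ≤ j → ∀ x, |∫ y, scaleFun n φ l (x - y) * scaleFun n ψ j y| ≤
      C * ((2 : ℝ) ^ (j - l))⁻¹ ^ M * 2 ^ (l * n) := by
  obtain ⟨B, hB⟩ := exists_abs_integral_sub_mul_le hφ hφs
  refine ⟨B * ∫ u, ‖u‖ ^ M * |ψ u|, fun l j hlj x => ?_⟩
  have hbound := hB _ (continuous_scaleFun hψ (j - l)) (hasCompactSupport_scaleFun hψs (j - l))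
    (momentsVanish_scaleFun hmψ (j - l)) ((2 : ℝ) ^ l • x)
  rw [integral_norm_pow_mul_abs_scaleFun] at hbound
  rw [integral_scaleFun_sub_mul_scaleFun φ ψ hlj, abs_mul, abs_of_pos (by positivity)]
  calc (2 : ℝ) ^ (l * n) * |∫ v, φ ((2 : ℝ) ^ l • x - v) * scaleFun n ψ (j - l) v|
      ≤ 2 ^ (l * n) * (B * (((2 : ℝ) ^ (j - l))⁻¹ ^ M * ∫ u, ‖u‖ ^ M * |ψ u|)) := by gcongr
    _ = _ := by ring

theorem two_rpow_sub_mul_natCast {l j : ℕ} (hlj : l ≤ j) (M : ℕ) :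
    (2 : ℝ) ^ (((l : ℝ) - j) * M) = ((2 : ℝ) ^ (j - l))⁻¹ ^ M := by
  rw [show (l : ℝ) - j = -((j - l : ℕ) : ℝ) by push_cast [hlj]; ring, Real.rpow_mul zero_le_two,
    Real.rpow_neg zero_le_two, Real.rpow_natCast, Real.rpow_natCast]

theorem exists_eLpNorm_conv_scaleFun_le {φ ψ : (Fin n → ℝ) → ℝ} (hφ : IsTestFun n φ)
    (hψ : IsTestFun n ψ) {L : ℤ} (hL : -1 ≤ L) (hmψ : MomentsVanish n L ψ) :
    ∃ C : ℝ, 0 < C ∧ ∀ l j : ℕ, l ≤ j →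
      eLpNorm (fun x => ∫ y, scaleFun n φ l (x - y) * scaleFun n ψ j y) ∞ volume ≤
        ENNReal.ofReal (C * 2 ^ (((l : ℝ) - (j : ℝ)) * ((L : ℝ) + 1)) * 2 ^ ((l : ℝ) * n)) := by
  obtain ⟨M, hM⟩ : ∃ M : ℕ, (M : ℤ) = L + 1 := ⟨(L + 1).toNat, Int.toNat_of_nonneg (by omega)⟩
  obtain ⟨C, hC⟩ := exists_abs_integral_scaleFun_sub_mul_scaleFun_le (M := M)
    (hφ.1.of_le (by exact_mod_cast le_top)) hφ.2 hψ.1.continuous hψ.2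
    (by rwa [hM, add_sub_cancel_right])
  refine ⟨max C 1, by positivity, fun l j hlj => ?_⟩
  have hMr : (M : ℝ) = L + 1 := by exact_mod_cast hM
  rw [eLpNorm_exponent_top, ← hMr, two_rpow_sub_mul_natCast hlj, ← Nat.cast_mul, Real.rpow_natCast]
  refine eLpNormEssSup_le_of_ae_bound (ae_of_all _ fun x => ?_)
  rw [Real.norm_eq_abs]
  exact (hC l j hlj x).trans (by gcongr; exact le_max_left _ _)

/-- the convolution estimate (3.17) for scaled kernels. -/
theorem convolution_kernel_estimate (n : ℕ) (φ ψ : (Fin n → ℝ) → ℝ)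
    (hφ : IsTestFun n φ) (hψ : IsTestFun n ψ)
    (Lφ Lψ : ℤ) (hLφ : -1 ≤ Lφ) (hLψ : -1 ≤ Lψ)
    (hmφ : MomentsVanish n Lφ φ) (hmψ : MomentsVanish n Lψ ψ) :
    ∃ C : ℝ, 0 < C ∧ ∀ l j : ℕ,
      (l ≤ j →
        eLpNorm (fun x => ∫ y, scaleFun n φ l (x - y) * scaleFun n ψ j y) ∞ volume ≤
          ENNReal.ofReal
            (C * 2 ^ (((l : ℝ) - (j : ℝ)) * ((Lψ : ℝ) + 1)) * 2 ^ ((l : ℝ) * n))) ∧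
      (j < l →
        eLpNorm (fun x => ∫ y, scaleFun n φ l (x - y) * scaleFun n ψ j y) ∞ volume ≤
          ENNReal.ofReal
            (C * 2 ^ (((j : ℝ) - (l : ℝ)) * ((Lφ : ℝ) + 1)) * 2 ^ ((j : ℝ) * n))) := by
  obtain ⟨Cψ, hCψ, hψbound⟩ := exists_eLpNorm_conv_scaleFun_le hφ hψ hLψ hmψ
  obtain ⟨Cφ, -, hφbound⟩ := exists_eLpNorm_conv_scaleFun_le hψ hφ hLφ hmφ
  refine ⟨max Cψ Cφ, lt_max_of_lt_left hCψ, fun l j => ⟨fun hlj => ?_, fun hjl => ?_⟩⟩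
  · exact (hψbound l j hlj).trans (by gcongr; exact le_max_left _ _)
  · simp_rw [integral_sub_mul_comm volume (scaleFun n φ l)]
    exact (hφbound j l hjl.le).trans (by gcongr; exact le_max_right _ _)
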